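/- arXiv:1311.2711 — 5 statements merged into one kernel-verified Lean document; each statement's English description precedes it below -/
import Mathlib

section
/- The algebra of invariants of the polynomial ring K[T_1,...,T_n,S_1,...,S_n] under the additive group action given by T_i ↦ T_i + k·S_i, S_i ↦ S_i (for k ∈ K) is generated by S_1,...,S_n together with the elements T_j·S_k − T_k·S_j for 1 ≤ j < k ≤ n. -/
/-!
The derivation `𝔇 = ∑ Sᵢ ∂/∂Tᵢ` is the coefficient of `t` in `f(T + tS)`, so over an infinite
field every invariant is killed by `𝔇`. Since `𝔇` has bidegree `(-1, 1)` in `(T, S)`, it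
suffices to treat `f` of bidegree `(a, b)` with `𝔇 f = 0`. The coefficients
`Aᵢⱼ = ∂²f/∂Sⱼ∂Tᵢ - ∂²f/∂Sᵢ∂Tⱼ` are again killed by `𝔇` (because `[∂/∂Sⱼ, 𝔇] = ∂/∂Tⱼ`),
have bidegree `(a - 1, b - 1)`, and the Euler identities in `T` and in `S` give
`∑ Aᵢⱼ (TᵢSⱼ - TⱼSᵢ) = 2a(b + 1) f`. Induction on `a` ends at `a = 0`, where `f ∈ K[S]`.
-/

open MvPolynomial

namespace MvPolynomial

variable {R σ M : Type*}

theorem pderiv_pderiv_comm [CommRing R] (u v : σ) (f : MvPolynomial σ R) :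
    pderiv u (pderiv v f) = pderiv v (pderiv u f) := by
  classical
  have h : ⁅pderiv u, pderiv v⁆ = (0 : Derivation R (MvPolynomial σ R) (MvPolynomial σ R)) :=
    derivation_ext fun w => by
      rw [Derivation.commutator_apply]
      simp [pderiv_X, Pi.single_apply, apply_ite]
  simpa [Derivation.commutator_apply, sub_eq_zero] using congr($h f)

variable [CommSemiring R] {w : σ → M} {m : M} {f : MvPolynomial σ R}

theorem IsWeightedHomogeneous.sum_smul_X_mul_pderiv [Fintype σ] [AddCommMonoid M] (φ : M →+ R)
    (hf : f.IsWeightedHomogeneous w m) : ∑ v, φ (w v) • (X v * pderiv v f) = φ m • f := by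
  induction hf using IsWeightedHomogeneous.induction_on with
  | zero => simp
  | add p q _ _ hp hq => simp only [map_add, mul_add, smul_add, Finset.sum_add_distrib, hp, hq]
  | monomial d r hd =>
    simp_rw [X_mul_pderiv_monomial, smul_comm (φ _) (d _), ← smul_assoc, ← Finset.sum_smul]
    rw [← hd, Finsupp.weight_eq_sum, map_sum]
    simp_rw [map_nsmul]

section Ordered

variable [AddCommMonoid M] [PartialOrder M] [IsOrderedAddMonoid M]

theorem IsWeightedHomogeneous.le_of_mem_vars (hw : ∀ v, 0 ≤ w v)
    (hf : f.IsWeightedHomogeneous w m) {v : σ} (hv : v ∈ f.vars) : w v ≤ m := by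
  obtain ⟨d, hd, hdv⟩ := (mem_vars_iff_mem_support v).mp hv
  exact hf (mem_support_iff.mp hd) ▸
    Finsupp.le_weight_of_ne_zero hw (Finsupp.mem_support_iff.mp hdv)

theorem IsWeightedHomogeneous.nonneg (hw : ∀ v, 0 ≤ w v)
    (hf : f.IsWeightedHomogeneous w m) (hf0 : f ≠ 0) : 0 ≤ m := by
  obtain ⟨d, hd⟩ := ne_zero_iff.mp hf0
  rw [← hf hd, Finsupp.weight_apply]
  exact Finsupp.sum_nonneg fun v _ => nsmul_nonneg (hw v) _

end Ordered

theorem weightedHomogeneousComponent_add_map [AddCancelCommMonoid M] {δ : M}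
    (L : MvPolynomial σ R →ₗ[R] MvPolynomial σ R)
    (hL : ∀ m f, f.IsWeightedHomogeneous w m → (L f).IsWeightedHomogeneous w (m + δ))
    (m : M) (f : MvPolynomial σ R) :
    weightedHomogeneousComponent w (m + δ) (L f) = L (weightedHomogeneousComponent w m f) := by
  classical
  have hfin : (Function.support fun m => weightedHomogeneousComponent w m f).Finite :=
    weightedHomogeneousComponent_finsupp f
  conv_lhs => rw [← sum_weightedHomogeneousComponent w f, finsum_eq_sum _ hfin]
  rw [map_sum, map_sum, Finset.sum_congr rfl fun μ _ => weightedHomogeneousComponent_of_mem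
    (hL _ _ (weightedHomogeneousComponent_isWeightedHomogeneous μ f))]
  simp_rw [add_left_inj]
  rw [Finset.sum_ite_eq, ite_eq_left_iff, Set.Finite.mem_toFinset, Function.notMem_support]
  exact fun h => by rw [h, map_zero]

end MvPolynomial

namespace TranslationInvariants

variable {K : Type*} [Field K] {n : ℕ}

local notation "𝒫" => MvPolynomial (Fin n ⊕ Fin n) K

variable (n) in
def bidegree : Fin n ⊕ Fin n → ℤ × ℤ := Sum.elim (fun _ => (1, 0)) (fun _ => (0, 1))

variable (K n) in
noncomputable def translationDerivation : Derivation K 𝒫 𝒫 :=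
  ∑ i : Fin n, (X (Sum.inr i) : 𝒫) • pderiv (Sum.inl i)

local notation "𝔇" => translationDerivation K n

theorem translationDerivation_apply (f : 𝒫) :
    𝔇 f = ∑ i, X (Sum.inr i) * pderiv (Sum.inl i) f := by
  rw [translationDerivation, ← Derivation.coeFnAddMonoidHom_apply, map_sum, Finset.sum_apply]
  simp [Derivation.coeFnAddMonoidHom_apply]

@[simp]
theorem translationDerivation_X_inl (i : Fin n) : 𝔇 (X (Sum.inl i)) = X (Sum.inr i) := by
  classical
  simp [translationDerivation_apply, Pi.single_apply]

@[simp]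
theorem translationDerivation_X_inr (i : Fin n) : 𝔇 (X (Sum.inr i)) = 0 := by
  simp [translationDerivation_apply]

theorem pderiv_inl_translationDerivation (i : Fin n) (f : 𝒫) :
    pderiv (Sum.inl i) (𝔇 f) = 𝔇 (pderiv (Sum.inl i) f) := by
  simp [translationDerivation_apply, pderiv_pderiv_comm (Sum.inl i)]

theorem pderiv_inr_translationDerivation (j : Fin n) (f : 𝒫) :
    pderiv (Sum.inr j) (𝔇 f) = pderiv (Sum.inl j) f + 𝔇 (pderiv (Sum.inr j) f) := by
  classical
  simp [translationDerivation_apply, pderiv_pderiv_comm (Sum.inr j), Pi.single_apply,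
    Finset.sum_add_distrib, add_comm]

theorem bidegree_nonneg (v : Fin n ⊕ Fin n) : 0 ≤ bidegree n v := by
  cases v <;> simp [bidegree, Prod.le_def]

theorem isWeightedHomogeneous_translationDerivation {f : 𝒫} {m : ℤ × ℤ}
    (hf : f.IsWeightedHomogeneous (bidegree n) m) :
    (𝔇 f).IsWeightedHomogeneous (bidegree n) (m + (-1, 1)) := by
  rw [translationDerivation_apply]
  refine IsWeightedHomogeneous.sum _ _ _ fun i _ => ?_
  convert (isWeightedHomogeneous_X K (bidegree n) (Sum.inr i)).mul
    (hf.pderiv (n' := m - (1, 0)) (i := Sum.inl i) (by simp [bidegree])) using 1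
  ext <;> simp [bidegree] <;> ring

theorem sum_X_inl_mul_pderiv {f : 𝒫} {m : ℤ × ℤ}
    (hf : f.IsWeightedHomogeneous (bidegree n) m) :
    ∑ i, X (Sum.inl i) * pderiv (Sum.inl i) f = (m.1 : K) • f := by
  simpa [Fintype.sum_sum_type, bidegree] using
    hf.sum_smul_X_mul_pderiv ((Int.castAddHom K).comp (AddMonoidHom.fst ℤ ℤ))

theorem sum_X_inr_mul_pderiv {f : 𝒫} {m : ℤ × ℤ}
    (hf : f.IsWeightedHomogeneous (bidegree n) m) :
    ∑ i, X (Sum.inr i) * pderiv (Sum.inr i) f = (m.2 : K) • f := by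
  simpa [Fintype.sum_sum_type, bidegree] using
    hf.sum_smul_X_mul_pderiv ((Int.castAddHom K).comp (AddMonoidHom.snd ℤ ℤ))

variable (K) in
noncomputable def minor (i j : Fin n) : 𝒫 :=
  X (Sum.inl i) * X (Sum.inr j) - X (Sum.inl j) * X (Sum.inr i)

variable (K n) in
def generators : Set 𝒫 :=
  {f | ∃ i, f = X (Sum.inr i)} ∪ {f | ∃ i j, i < j ∧ f = minor K i j}

local notation "𝔅" => Algebra.adjoin K (generators K n)

theorem minor_mem_adjoin (i j : Fin n) : minor K i j ∈ 𝔅 := by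
  rcases lt_trichotomy i j with h | rfl | h
  · exact Algebra.subset_adjoin (Or.inr ⟨i, j, h, rfl⟩)
  · simp [minor]
  · rw [show minor K i j = -minor K j i by simp [minor]]
    exact neg_mem (Algebra.subset_adjoin (Or.inr ⟨j, i, h, rfl⟩))

theorem mem_adjoin_of_isWeightedHomogeneous_zero {f : 𝒫} {b : ℤ}
    (hf : f.IsWeightedHomogeneous (bidegree n) (0, b)) : f ∈ 𝔅 := by
  have hvars : ↑f.vars ⊆ Set.range (Sum.inr : Fin n → Fin n ⊕ Fin n) := by
    rintro (i | i) hv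
    · simpa [bidegree, Prod.le_def] using hf.le_of_mem_vars bidegree_nonneg hv
    · exact ⟨i, rfl⟩
  have hf' := mem_supported.mpr hvars
  rw [supported_eq_adjoin_X] at hf'
  refine Algebra.adjoin_mono ?_ hf'
  rintro _ ⟨_, ⟨i, rfl⟩, rfl⟩
  exact Or.inl ⟨i, rfl⟩

variable (n) in
noncomputable def translate (k : K) : 𝒫 →ₐ[K] 𝒫 :=
  aeval (Sum.elim (fun i => X (Sum.inl i) + C k * X (Sum.inr i)) (fun i => X (Sum.inr i)))

theorem translate_zero : translate n (0 : K) = AlgHom.id K 𝒫 :=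
  algHom_ext fun v => by cases v <;> simp [translate]

theorem translate_apply_of_mem_adjoin {f : 𝒫} (hf : f ∈ 𝔅) (k : K) : translate n k f = f := by
  suffices 𝔅 ≤ AlgHom.equalizer (translate n k) (AlgHom.id K 𝒫) from this hf
  refine Algebra.adjoin_le ?_
  rintro _ (⟨i, rfl⟩ | ⟨i, j, -, rfl⟩)
  · simp [translate]
  · simp [translate, minor]
    ring

variable (K n) in
noncomputable def genericTranslate : 𝒫 →ₐ[K] Polynomial 𝒫 :=
  aeval (Sum.elim
    (fun i => Polynomial.C (X (Sum.inl i)) + Polynomial.C (X (Sum.inr i)) * Polynomial.X)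
    (fun i => Polynomial.C (X (Sum.inr i))))

theorem eval_genericTranslate (k : K) (f : 𝒫) :
    (genericTranslate K n f).eval (C k) = translate n k f := by
  have : ((Polynomial.aeval (C k : 𝒫)).restrictScalars K).comp (genericTranslate K n) =
      translate n k :=
    algHom_ext fun v => by cases v <;> simp [genericTranslate, translate, mul_comm (C k)]
  simpa using congr($this f)

theorem coeff_zero_genericTranslate (f : 𝒫) : (genericTranslate K n f).coeff 0 = f := by
  rw [Polynomial.coeff_zero_eq_eval_zero, ← C_0, eval_genericTranslate, translate_zero,
    AlgHom.id_apply]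

theorem coeff_one_genericTranslate (f : 𝒫) : (genericTranslate K n f).coeff 1 = 𝔇 f := by
  induction f using MvPolynomial.induction_on with
  | C a => simp [genericTranslate]
  | add p q hp hq => simp [hp, hq]
  | mul_X p v hp =>
    rw [map_mul, Polynomial.mul_coeff_one, hp, coeff_zero_genericTranslate, Derivation.leibniz,
      smul_eq_mul, smul_eq_mul]
    cases v <;> simp [genericTranslate] <;> ring

theorem translationDerivation_eq_zero_of_forall_translate [Infinite K] {f : 𝒫}
    (hf : ∀ k : K, translate n k f = f) : 𝔇 f = 0 := by
  have h : genericTranslate K n f = Polynomial.C f := by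
    refine Polynomial.eq_of_infinite_eval_eq _ _ ((Set.infinite_range_of_injective
      (C_injective (Fin n ⊕ Fin n) K)).mono ?_)
    rintro _ ⟨k, rfl⟩
    simp [eval_genericTranslate, hf k]
  simpa [h] using (coeff_one_genericTranslate f).symm

noncomputable def minorCoeff (f : 𝒫) (i j : Fin n) : 𝒫 :=
  pderiv (Sum.inr j) (pderiv (Sum.inl i) f) - pderiv (Sum.inr i) (pderiv (Sum.inl j) f)

theorem isWeightedHomogeneous_minorCoeff {f : 𝒫} {m : ℤ × ℤ}
    (hf : f.IsWeightedHomogeneous (bidegree n) m) (i j : Fin n) :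
    (minorCoeff f i j).IsWeightedHomogeneous (bidegree n) (m - (1, 1)) := by
  have h : ∀ i j, (pderiv (Sum.inr j) (pderiv (Sum.inl i) f)).IsWeightedHomogeneous
      (bidegree n) (m - (1, 1)) := fun i j =>
    (hf.pderiv (n' := m - (1, 0)) (by simp [bidegree])).pderiv (by ext <;> simp [bidegree])
  exact (h i j).sub (h j i)

theorem translationDerivation_minorCoeff {f : 𝒫} (hf : 𝔇 f = 0) (i j : Fin n) :
    𝔇 (minorCoeff f i j) = 0 := by
  have h : ∀ i j, 𝔇 (pderiv (Sum.inr j) (pderiv (Sum.inl i) f)) =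
      -pderiv (Sum.inl j) (pderiv (Sum.inl i) f) := fun i j => by
    have := pderiv_inr_translationDerivation j (pderiv (Sum.inl i) f)
    rw [← pderiv_inl_translationDerivation, hf, map_zero, map_zero] at this
    linear_combination -this
  rw [minorCoeff, map_sub, h, h, pderiv_pderiv_comm (Sum.inl i), sub_self]

theorem sum_minorCoeff_mul_X_inl_mul_X_inr {f : 𝒫} {m : ℤ × ℤ}
    (hf : f.IsWeightedHomogeneous (bidegree n) m) (hD : 𝔇 f = 0) :
    ∑ i, ∑ j, minorCoeff f i j * (X (Sum.inl i) * X (Sum.inr j)) =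
      ((m.1 * (m.2 + 1) : ℤ) : K) • f := by
  have hS : ∀ i, ∑ j, X (Sum.inr j) * pderiv (Sum.inr i) (pderiv (Sum.inl j) f) =
      -pderiv (Sum.inl i) f := fun i => by
    have := pderiv_inr_translationDerivation i f
    simp only [hD, map_zero, translationDerivation_apply, pderiv_pderiv_comm (Sum.inl _)] at this
    linear_combination -this
  have hrow : ∀ i, ∑ j, minorCoeff f i j * (X (Sum.inl i) * X (Sum.inr j)) =
      ((m.2 : K) + 1) • (X (Sum.inl i) * pderiv (Sum.inl i) f) := fun i => by
    have hE := sum_X_inr_mul_pderiv (hf.pderiv (n' := m - (1, 0)) (i := Sum.inl i)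
      (by simp [bidegree]))
    calc ∑ j, minorCoeff f i j * (X (Sum.inl i) * X (Sum.inr j))
        = X (Sum.inl i) * (∑ j, X (Sum.inr j) * pderiv (Sum.inr j) (pderiv (Sum.inl i) f) -
            ∑ j, X (Sum.inr j) * pderiv (Sum.inr i) (pderiv (Sum.inl j) f)) := by
          rw [mul_sub, Finset.mul_sum, Finset.mul_sum, ← Finset.sum_sub_distrib]
          exact Finset.sum_congr rfl fun j _ => by rw [minorCoeff]; ring
      _ = ((m.2 : K) + 1) • (X (Sum.inl i) * pderiv (Sum.inl i) f) := by
          rw [hE, hS, Algebra.smul_def, Algebra.smul_def, map_add, map_one]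
          simp only [Prod.snd_sub, sub_zero]
          ring
  rw [Finset.sum_congr rfl fun i _ => hrow i, ← Finset.smul_sum, sum_X_inl_mul_pderiv hf,
    smul_smul]
  push_cast
  ring_nf

theorem minorCoeff_swap (f : 𝒫) (i j : Fin n) : minorCoeff f j i = -minorCoeff f i j :=
  (neg_sub _ _).symm

theorem sum_minorCoeff_mul_minor {f : 𝒫} {m : ℤ × ℤ}
    (hf : f.IsWeightedHomogeneous (bidegree n) m) (hD : 𝔇 f = 0) :
    ∑ i, ∑ j, minorCoeff f i j * minor K i j = ((2 * m.1 * (m.2 + 1) : ℤ) : K) • f := by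
  have hswap : ∑ i, ∑ j, minorCoeff f i j * (X (Sum.inl j) * X (Sum.inr i)) =
      -∑ i, ∑ j, minorCoeff f i j * (X (Sum.inl i) * X (Sum.inr j)) := by
    rw [Finset.sum_comm, ← Finset.sum_neg_distrib]
    refine Finset.sum_congr rfl fun i _ => ?_
    rw [← Finset.sum_neg_distrib]
    exact Finset.sum_congr rfl fun j _ => by rw [minorCoeff_swap, neg_mul]
  simp only [minor, mul_sub, Finset.sum_sub_distrib, hswap,
    sum_minorCoeff_mul_X_inl_mul_X_inr hf hD, sub_neg_eq_add, ← add_smul]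
  push_cast
  ring_nf

variable [CharZero K]

theorem mem_adjoin_of_isWeightedHomogeneous (a : ℕ) (b : ℤ) {f : 𝒫}
    (hf : f.IsWeightedHomogeneous (bidegree n) (a, b)) (hD : 𝔇 f = 0) : f ∈ 𝔅 := by
  induction a generalizing b f with
  | zero => exact mem_adjoin_of_isWeightedHomogeneous_zero hf
  | succ a ih =>
    rcases eq_or_ne f 0 with rfl | hf0
    · exact zero_mem _
    have hb : 0 ≤ b := (hf.nonneg bidegree_nonneg hf0).2
    have hA : ∀ i j, minorCoeff f i j ∈ 𝔅 := fun i j =>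
      ih (b - 1) (by simpa using isWeightedHomogeneous_minorCoeff hf i j)
        (translationDerivation_minorCoeff hD i j)
    have hc : ((2 * (a + 1 : ℕ) * (b + 1) : ℤ) : K) ≠ 0 :=
      Int.cast_ne_zero.mpr (by positivity)
    rw [← inv_smul_smul₀ hc f, ← sum_minorCoeff_mul_minor hf hD]
    exact Subalgebra.smul_mem _ (Subalgebra.sum_mem _ fun i _ => Subalgebra.sum_mem _ fun j _ =>
      Subalgebra.mul_mem _ (hA i j) (minor_mem_adjoin i j)) _

theorem mem_adjoin_of_translationDerivation_eq_zero {f : 𝒫} (hD : 𝔇 f = 0) : f ∈ 𝔅 := by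
  rw [← sum_weightedHomogeneousComponent (bidegree n) f]
  refine finsum_induction (· ∈ 𝔅) (zero_mem _) (fun _ _ => add_mem) fun m => ?_
  have hm := weightedHomogeneousComponent_isWeightedHomogeneous (w := bidegree n) m f
  have hDm : 𝔇 (weightedHomogeneousComponent (bidegree n) m f) = 0 := by
    simpa [hD] using (weightedHomogeneousComponent_add_map (𝔇 : 𝒫 →ₗ[K] 𝒫)
      (fun _ _ => isWeightedHomogeneous_translationDerivation) m f).symm
  rcases eq_or_ne (weightedHomogeneousComponent (bidegree n) m f) 0 with h | h
  · exact h ▸ zero_mem _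
  obtain ⟨a, ha⟩ := Int.eq_ofNat_of_zero_le (hm.nonneg bidegree_nonneg h).1
  exact mem_adjoin_of_isWeightedHomogeneous a m.2 (ha ▸ hm) hDm

end TranslationInvariants

theorem stmt_0_general {K : Type*} [Field K] [CharZero K] (n : ℕ) :
    {f : MvPolynomial (Fin n ⊕ Fin n) K |
      ∀ k : K,
        aeval (Sum.elim
          (fun i => (X (Sum.inl i) : MvPolynomial (Fin n ⊕ Fin n) K) + C k * X (Sum.inr i))
          (fun i => (X (Sum.inr i) : MvPolynomial (Fin n ⊕ Fin n) K))) f = f}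
    = (Algebra.adjoin K
        ({f : MvPolynomial (Fin n ⊕ Fin n) K | ∃ i : Fin n, f = X (Sum.inr i)} ∪
         {f : MvPolynomial (Fin n ⊕ Fin n) K | ∃ j k : Fin n, j < k ∧
            f = X (Sum.inl j) * X (Sum.inr k) - X (Sum.inl k) * X (Sum.inr j)}) :
        Subalgebra K (MvPolynomial (Fin n ⊕ Fin n) K)) := by
  ext f
  refine ⟨fun hf => TranslationInvariants.mem_adjoin_of_translationDerivation_eq_zero
    (TranslationInvariants.translationDerivation_eq_zero_of_forall_translate hf),
    fun hf k => TranslationInvariants.translate_apply_of_mem_adjoin hf k⟩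

/-- The invariant algebra of `K[T₁,…,Tₙ,S₁,…,Sₙ]` under the `𝔾ₐ`-action
`Tᵢ ↦ Tᵢ + k·Sᵢ`, `Sᵢ ↦ Sᵢ` is generated by the `Sᵢ` and the `TⱼSₖ − TₖSⱼ`. -/
theorem stmt_0 {K : Type*} [Field K] [IsAlgClosed K] [CharZero K] (n : ℕ) :
    {f : MvPolynomial (Fin n ⊕ Fin n) K |
      ∀ k : K,
        aeval (Sum.elim
          (fun i => (X (Sum.inl i) : MvPolynomial (Fin n ⊕ Fin n) K) + C k * X (Sum.inr i))
          (fun i => (X (Sum.inr i) : MvPolynomial (Fin n ⊕ Fin n) K))) f = f}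
    = (Algebra.adjoin K
        ({f : MvPolynomial (Fin n ⊕ Fin n) K | ∃ i : Fin n, f = X (Sum.inr i)} ∪
         {f : MvPolynomial (Fin n ⊕ Fin n) K | ∃ j k : Fin n, j < k ∧
            f = X (Sum.inl j) * X (Sum.inr k) - X (Sum.inl k) * X (Sum.inr j)}) :
        Subalgebra K (MvPolynomial (Fin n ⊕ Fin n) K)) :=
  stmt_0_general n
end

section
/- Let I ⊆ {{i,j} : 0 ≤ i < j ≤ n} be a set of pairs satisfying the exchange condition: whenever {i,j} ∈ I and {k,l} ∈ I, then ({j,l} ∈ I and {i,k} ∈ I) or ({j,k} ∈ I and {i,l} ∈ I). Then if additionally there exists k with {0,k} ∈ I, there exist vectors x, y ∈ K^n (with K infinite) such that the 2-vector z = (1,x) ∧ (0,y) ∈ ⋀²K^{n+1} has z_{ij} ≠ 0 if and only if {i,j} ∈ I. -/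
/-!
On the vertices that lie on some pair of `I`, the exchange condition makes "not joined by `I`"
an equivalence relation whose classes are the neighbourhoods, so `I` is complete multipartite:
two vertices are joined iff both have nonempty and distinct neighbourhoods. Sending a vertex
with empty neighbourhood to `0 ∈ K²`, the class of `0` to `(1, 0)` and every other class to
`(c, 1)` with its own `c ∈ K` (here `K` infinite is used), the determinant of two such points is
nonzero exactly on `I`; their first and second coordinates are `(1, x)` and `(0, y)`.
-/

/-- Coordinate model of the wedge `u ∧ v` of two vectors: `(u ∧ v)ᵢⱼ = uᵢvⱼ − uⱼvᵢ`. -/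
def wedge {K : Type*} [Field K] {m : ℕ} (u v : Fin m → K) : Fin m → Fin m → K :=
  fun i j => u i * v j - u j * v i

section Exchange

variable {α : Type*}

def neighbors (I : Set (Sym2 α)) (i : α) : Set α := {j | s(i, j) ∈ I}

theorem neighbors_subset_of_not_mem {I : Set (Sym2 α)}
    (hex : ∀ i j k l : α, s(i, j) ∈ I → s(k, l) ∈ I →
      (s(j, l) ∈ I ∧ s(i, k) ∈ I) ∨ (s(j, k) ∈ I ∧ s(i, l) ∈ I))
    {i j : α} (hj : (neighbors I j).Nonempty) (hij : s(i, j) ∉ I) :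
    neighbors I i ⊆ neighbors I j := by
  obtain ⟨k, hjk⟩ := hj
  intro m him
  rcases hex i m j k him hjk with ⟨-, hij'⟩ | ⟨hmj, -⟩
  · exact absurd hij' hij
  · show s(j, m) ∈ I
    rwa [Sym2.eq_swap]

theorem mem_iff_neighbors_ne {I : Set (Sym2 α)} (hdiag : ∀ i : α, s(i, i) ∉ I)
    (hex : ∀ i j k l : α, s(i, j) ∈ I → s(k, l) ∈ I →
      (s(j, l) ∈ I ∧ s(i, k) ∈ I) ∨ (s(j, k) ∈ I ∧ s(i, l) ∈ I))
    (i j : α) :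
    s(i, j) ∈ I ↔
      neighbors I i ≠ ∅ ∧ neighbors I j ≠ ∅ ∧ neighbors I i ≠ neighbors I j := by
  constructor
  · intro hij
    have hji : s(j, i) ∈ I := by rwa [Sym2.eq_swap]
    refine ⟨Set.nonempty_iff_ne_empty.mp ⟨j, hij⟩, Set.nonempty_iff_ne_empty.mp ⟨i, hji⟩, ?_⟩
    intro heq
    exact hdiag j (show j ∈ neighbors I j from heq ▸ hij)
  · rintro ⟨hi, hj, hne⟩
    by_contra hij
    have hji : s(j, i) ∉ I := by rwa [Sym2.eq_swap]
    exact hne <| (neighbors_subset_of_not_mem hex (Set.nonempty_iff_ne_empty.mpr hj) hij).antisymm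
      (neighbors_subset_of_not_mem hex (Set.nonempty_iff_ne_empty.mpr hi) hji)

end Exchange

section LinePoint

variable {β K : Type*} [DecidableEq β] [Field K]

def linePoint (c : β → K) (o z b : β) : K × K :=
  if b = z then (0, 0) else if b = o then (1, 0) else (c b, 1)

theorem det_linePoint_ne_zero_iff {c : β → K} (hc : Function.Injective c) {o z : β}
    (hoz : o ≠ z) (a b : β) :
    (linePoint c o z a).1 * (linePoint c o z b).2 -
        (linePoint c o z b).1 * (linePoint c o z a).2 ≠ 0 ↔
      a ≠ z ∧ b ≠ z ∧ a ≠ b := by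
  unfold linePoint
  by_cases ha : a = z <;> by_cases hb : b = z <;> by_cases hao : a = o <;>
    by_cases hbo : b = o <;> subst_vars <;> simp_all [sub_eq_zero, hc.eq_iff, eq_comm]

end LinePoint

theorem stmt_5_general {K : Type*} [Field K] [Infinite K] (n : ℕ)
    (I : Set (Sym2 (Fin (n + 1))))
    (hdiag : ∀ i : Fin (n + 1), s(i, i) ∉ I)
    (hex : ∀ i j k l : Fin (n + 1), s(i, j) ∈ I → s(k, l) ∈ I →
      (s(j, l) ∈ I ∧ s(i, k) ∈ I) ∨ (s(j, k) ∈ I ∧ s(i, l) ∈ I))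
    (h0 : ∃ k : Fin (n + 1), s((0 : Fin (n + 1)), k) ∈ I) :
    ∃ x y : Fin n → K, ∀ i j : Fin (n + 1),
      wedge (Fin.cons 1 x) (Fin.cons 0 y) i j ≠ 0 ↔ s(i, j) ∈ I := by
  classical
  obtain ⟨e, he⟩ := Countable.exists_injective_nat (Set (Fin (n + 1)))
  have hc : Function.Injective (Infinite.natEmbedding K ∘ e) :=
    (Infinite.natEmbedding K).injective.comp he
  have ho : neighbors I 0 ≠ ∅ := Set.nonempty_iff_ne_empty.mp h0
  let p : Fin (n + 1) → K × K := fun i =>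
    linePoint (Infinite.natEmbedding K ∘ e) (neighbors I 0) ∅ (neighbors I i)
  have hp0 : p 0 = (1, 0) := by simp [p, linePoint, ho]
  refine ⟨Fin.tail fun i => (p i).1, Fin.tail fun i => (p i).2, fun i j => ?_⟩
  rw [mem_iff_neighbors_ne hdiag hex, ← det_linePoint_ne_zero_iff hc ho]
  have hx : (Fin.cons 1 (Fin.tail fun i => (p i).1) : Fin (n + 1) → K) = fun i => (p i).1 := by
    simpa [hp0] using Fin.cons_self_tail fun i => (p i).1
  have hy : (Fin.cons 0 (Fin.tail fun i => (p i).2) : Fin (n + 1) → K) = fun i => (p i).2 := by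
    simpa [hp0] using Fin.cons_self_tail fun i => (p i).2
  rw [hx, hy]
  rfl

/-- If a set `I` of 2-element subsets of `{0,…,n}` satisfies the exchange condition (*)
and contains a pair `{0,k}`, then (over an infinite field) there are `x, y ∈ Kⁿ` such
that `z = (1,x) ∧ (0,y)` has `z_{ij} ≠ 0` exactly for `{i,j} ∈ I`. -/
theorem stmt_5 {K : Type*} [Field K] [Infinite K] (n : ℕ) (hn : 2 ≤ n)
    (I : Set (Sym2 (Fin (n + 1))))
    (hdiag : ∀ i : Fin (n + 1), s(i, i) ∉ I)
    (hex : ∀ i j k l : Fin (n + 1), s(i, j) ∈ I → s(k, l) ∈ I →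
      (s(j, l) ∈ I ∧ s(i, k) ∈ I) ∨ (s(j, k) ∈ I ∧ s(i, l) ∈ I))
    (h0 : ∃ k : Fin (n + 1), s((0 : Fin (n + 1)), k) ∈ I) :
    ∃ x y : Fin n → K, ∀ i j : Fin (n + 1),
      wedge (Fin.cons 1 x) (Fin.cons 0 y) i j ≠ 0 ↔ s(i, j) ∈ I :=
  stmt_5_general n I hdiag hex h0
end

section
/- If a subset I of the 2-element subsets of {0,...,n} is a Y-set (i.e., there is a decomposable 2-vector z in the cone over Gr(2,n+1) with z_{ij} ≠ 0 exactly for {i,j} ∈ I), then I satisfies the exchange property: for {i,j},{k,l} ∈ I, either {j,l} and {i,k} are both in I, or {j,k} and {i,l} are both in I. -/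
theorem wedge_mul_wedge {K : Type*} [Field K] {m : ℕ} (u v : Fin m → K) (i j k l : Fin m) :
    wedge u v i j * wedge u v k l =
      wedge u v i k * wedge u v j l - wedge u v i l * wedge u v j k := by
  unfold wedge
  ring

theorem and_ne_zero_or_and_ne_zero_of_mul_sub_mul_ne_zero {R : Type*} [NonUnitalNonAssocRing R]
    {a b c d : R} (h : a * b - c * d ≠ 0) : (a ≠ 0 ∧ b ≠ 0) ∨ (c ≠ 0 ∧ d ≠ 0) := by
  by_cases hab : a * b = 0
  · rw [hab, zero_sub, neg_ne_zero] at h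
    exact Or.inr (ne_zero_and_ne_zero_of_mul h)
  · exact Or.inl (ne_zero_and_ne_zero_of_mul hab)

theorem stmt_6_general {K : Type*} [Field K] (n : ℕ)
    (u v : Fin (n + 1) → K) (I : Set (Sym2 (Fin (n + 1))))
    (hI : ∀ i j : Fin (n + 1), s(i, j) ∈ I ↔ wedge u v i j ≠ 0) :
    ∀ i j k l : Fin (n + 1), s(i, j) ∈ I → s(k, l) ∈ I →
      (s(j, l) ∈ I ∧ s(i, k) ∈ I) ∨ (s(j, k) ∈ I ∧ s(i, l) ∈ I) := by
  intro i j k l hij hkl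
  rw [hI] at hij hkl
  have hprod : wedge u v i k * wedge u v j l - wedge u v i l * wedge u v j k ≠ 0 := by
    rw [← wedge_mul_wedge]
    exact mul_ne_zero hij hkl
  simp only [hI]
  exact (and_ne_zero_or_and_ne_zero_of_mul_sub_mul_ne_zero hprod).imp And.symm And.symm

/-- A `Ȳ`-set (the support of a decomposable 2-vector in the cone over `Gr(2,n+1)`)
satisfies the exchange property: for `{i,j},{k,l} ∈ I`, either `{j,l},{i,k} ∈ I`
or `{j,k},{i,l} ∈ I`. -/
theorem stmt_6 {K : Type*} [Field K] (n : ℕ) (hn : 3 ≤ n)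
    (u v : Fin (n + 1) → K) (I : Set (Sym2 (Fin (n + 1))))
    (hI : ∀ i j : Fin (n + 1), s(i, j) ∈ I ↔ wedge u v i j ≠ 0) :
    ∀ i j k l : Fin (n + 1), s(i, j) ∈ I → s(k, l) ∈ I →
      (s(j, l) ∈ I ∧ s(i, k) ∈ I) ∨ (s(j, k) ∈ I ∧ s(i, l) ∈ I) :=
  stmt_6_general n u v I hI
end

section
/- Let I be a set of 2-element subsets of N_0 = {0,...,n} satisfying the exchange condition (*), and define J := (I ∩ pairs in {1,...,n}) ∪ {{i,j} ⊆ {1,...,n} : {0,i} ∈ I and {0,j} ∈ I}. Then J also satisfies the exchange condition (*) on pairs from {1,...,n}. -/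
/-!
Read `I` as a symmetric relation `r` on the vertices. Then `J` is obtained from `r` in three
steps, each of which preserves the exchange condition: first add all edges between neighbours
of `0` (the exchange condition for `r` at `{i,j}` and `{0,k}` produces the edges needed for the
new pairs), then discard loops, and finally restrict to vertices different from `0`.
-/

/-- The set `J = (I ∩ pairs from {1,…,n}) ∪ {{i,j} : {0,i} ∈ I and {0,j} ∈ I}`
associated to a set `I` of 2-element subsets of `{0,…,n}`. -/
def Jset (n : ℕ) (I : Set (Sym2 (Fin (n + 1)))) : Set (Sym2 (Fin (n + 1))) :=
  {e | (e ∈ I ∧ (0 : Fin (n + 1)) ∉ e) ∨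
    ∃ a b : Fin (n + 1), a ≠ 0 ∧ b ≠ 0 ∧ a ≠ b ∧ e = s(a, b) ∧
      s((0 : Fin (n + 1)), a) ∈ I ∧ s((0 : Fin (n + 1)), b) ∈ I}

section Exchange

variable {V : Type*}

def IsExchangeRel (r : V → V → Prop) : Prop :=
  ∀ i j k l, r i j → r k l → (r j l ∧ r i k) ∨ (r j k ∧ r i l)

def fillNeighbors (r : V → V → Prop) (o x y : V) : Prop :=
  r x y ∨ (r o x ∧ r o y)

variable {r : V → V → Prop}

instance [Std.Symm r] (o : V) : Std.Symm (fillNeighbors r o) where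
  symm := by
    rintro x y (h | ⟨hx, hy⟩)
    · exact Or.inl (symm h)
    · exact Or.inr ⟨hy, hx⟩

lemma isExchangeRel_fillNeighbors [Std.Symm r] (hex : IsExchangeRel r) (o : V) :
    IsExchangeRel (fillNeighbors r o) := by
  have mixed : ∀ i j k l, r i j → r o k → r o l →
      (fillNeighbors r o j l ∧ fillNeighbors r o i k) ∨
        (fillNeighbors r o j k ∧ fillNeighbors r o i l) := by
    intro i j k l hij hk hl
    rcases hex i j o k hij hk with ⟨hjk, hio⟩ | ⟨hjo, hik⟩
    · exact Or.inr ⟨Or.inl hjk, Or.inr ⟨symm hio, hl⟩⟩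
    · exact Or.inl ⟨Or.inr ⟨symm hjo, hl⟩, Or.inl hik⟩
  rintro i j k l (hij | ⟨hi, hj⟩) (hkl | ⟨hk, hl⟩)
  · exact (hex i j k l hij hkl).imp (And.imp Or.inl Or.inl) (And.imp Or.inl Or.inl)
  · exact mixed i j k l hij hk hl
  · rcases mixed k l i j hkl hi hj with ⟨hlj, hki⟩ | ⟨hli, hkj⟩
    · exact Or.inl ⟨symm hlj, symm hki⟩
    · exact Or.inr ⟨symm hkj, symm hli⟩
  · exact Or.inl ⟨Or.inr ⟨hj, hl⟩, Or.inr ⟨hi, hk⟩⟩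

/-- When two of the four vertices coincide, one of the two alternatives is made of the given
pairs themselves, so loops never have to be produced. -/
lemma IsExchangeRel.offDiag [Std.Symm r] (hex : IsExchangeRel r) :
    IsExchangeRel fun x y => x ≠ y ∧ r x y := by
  rintro i j k l ⟨hij, rij⟩ ⟨hkl, rkl⟩
  by_cases hjl : j = l
  · subst hjl
    exact Or.inr ⟨⟨hkl.symm, symm rkl⟩, hij, rij⟩
  by_cases hik : i = k
  · subst hik
    exact Or.inr ⟨⟨hij.symm, symm rij⟩, hkl, rkl⟩
  by_cases hjk : j = k
  · subst hjk
    exact Or.inl ⟨⟨hkl, rkl⟩, hij, rij⟩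
  by_cases hil : i = l
  · subst hil
    exact Or.inl ⟨⟨hij.symm, symm rij⟩, hkl.symm, symm rkl⟩
  exact (hex i j k l rij rkl).imp (fun h => ⟨⟨hjl, h.1⟩, hik, h.2⟩)
    (fun h => ⟨⟨hjk, h.1⟩, hil, h.2⟩)

lemma IsExchangeRel.restrict (hex : IsExchangeRel r) (p : V → Prop) :
    IsExchangeRel fun x y => p x ∧ p y ∧ r x y := by
  rintro i j k l ⟨hi, hj, rij⟩ ⟨hk, hl, rkl⟩
  exact (hex i j k l rij rkl).imp (fun h => ⟨⟨hj, hl, h.1⟩, hi, hk, h.2⟩)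
    (fun h => ⟨⟨hj, hk, h.1⟩, hi, hl, h.2⟩)

end Exchange

lemma mem_Jset_iff {n : ℕ} {I : Set (Sym2 (Fin (n + 1)))} (hdiag : ∀ i, s(i, i) ∉ I)
    (x y : Fin (n + 1)) :
    s(x, y) ∈ Jset n I ↔
      x ≠ 0 ∧ y ≠ 0 ∧ x ≠ y ∧ fillNeighbors (fun a b => s(a, b) ∈ I) 0 x y := by
  constructor
  · rintro (⟨hI, h0⟩ | ⟨a, b, ha, hb, hab, heq, h0a, h0b⟩)
    · simp only [Sym2.mem_iff, not_or] at h0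
      exact ⟨Ne.symm h0.1, Ne.symm h0.2, fun h => hdiag y (h ▸ hI), Or.inl hI⟩
    · rcases Sym2.eq_iff.1 heq with ⟨rfl, rfl⟩ | ⟨rfl, rfl⟩
      · exact ⟨ha, hb, hab, Or.inr ⟨h0a, h0b⟩⟩
      · exact ⟨hb, ha, hab.symm, Or.inr ⟨h0b, h0a⟩⟩
  · rintro ⟨hx, hy, hxy, hI | ⟨h0x, h0y⟩⟩
    · refine Or.inl ⟨hI, ?_⟩
      simp only [Sym2.mem_iff, not_or]
      exact ⟨Ne.symm hx, Ne.symm hy⟩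
    · exact Or.inr ⟨x, y, hx, hy, hxy, rfl, h0x, h0y⟩

/-- If `I` satisfies the exchange condition (*), then so does
`J = (I ∩ pairs from {1,…,n}) ∪ {{i,j} : {0,i},{0,j} ∈ I}`. -/
theorem stmt_7 (n : ℕ) (I : Set (Sym2 (Fin (n + 1))))
    (hdiag : ∀ i : Fin (n + 1), s(i, i) ∉ I)
    (hex : ∀ i j k l : Fin (n + 1), s(i, j) ∈ I → s(k, l) ∈ I →
      (s(j, l) ∈ I ∧ s(i, k) ∈ I) ∨ (s(j, k) ∈ I ∧ s(i, l) ∈ I)) :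
    ∀ i j k l : Fin (n + 1), s(i, j) ∈ Jset n I → s(k, l) ∈ Jset n I →
      (s(j, l) ∈ Jset n I ∧ s(i, k) ∈ Jset n I) ∨
      (s(j, k) ∈ Jset n I ∧ s(i, l) ∈ Jset n I) := by
  have : Std.Symm fun a b : Fin (n + 1) => s(a, b) ∈ I := ⟨fun a b h => by
    simpa only [Sym2.eq_swap] using h⟩
  have hJ := (isExchangeRel_fillNeighbors hex 0).offDiag.restrict (· ≠ 0)
  intro i j k l
  simp only [mem_Jset_iff hdiag]
  exact hJ i j k l
end

section
/- For a nonzero y ∈ K^n and the affine subspace W_y := e_0 ∧ (0,y) + ⋀²({0}×K^n) ⊆ ⋀²K^{n+1}, the linear map κ(·, y) : K^n → ⋀²K^{n+1}, x ↦ (1,x) ∧ (0,y), has image exactly W_y ∩ Ȳ, where Ȳ is the set of decomposable 2-vectors; moreover κ(·,y) has rank n − 1. -/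
open Submodule

section Wedge

variable {K : Type*} [Field K] {m : ℕ}

theorem wedge_eq_zero_iff {u v : Fin m → K} (hv : v ≠ 0) : wedge u v = 0 ↔ u ∈ K ∙ v := by
  rw [mem_span_singleton]
  constructor
  · intro h
    obtain ⟨j, hj⟩ : ∃ j, v j ≠ 0 := Function.ne_iff.mp hv
    refine ⟨u j / v j, funext fun i => ?_⟩
    have hij : u i * v j - u j * v i = 0 := congrFun (congrFun h i) j
    simp only [Pi.smul_apply, smul_eq_mul]
    field_simp
    linear_combination -hij
  · rintro ⟨c, rfl⟩
    funext i j
    simp only [wedge, Pi.smul_apply, smul_eq_mul, Pi.zero_apply]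
    ring

theorem exists_wedge_eq_wedge_apply {u v : Fin m → K} (i : Fin m) (h : wedge u v i ≠ 0) :
    ∃ a : Fin m → K, a i = 1 ∧ wedge u v = wedge a (wedge u v i) := by
  have huv : u i ≠ 0 ∨ v i ≠ 0 := by
    by_contra! h0
    exact h (funext fun j => by simp [wedge, h0.1, h0.2])
  rcases huv with hu | hv
  · refine ⟨(u i)⁻¹ • u, by simp [hu], funext₂ fun j k => ?_⟩
    simp only [wedge, Pi.smul_apply, smul_eq_mul]
    field_simp
    ring
  · refine ⟨(v i)⁻¹ • v, by simp [hv], funext₂ fun j k => ?_⟩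
    simp only [wedge, Pi.smul_apply, smul_eq_mul]
    field_simp
    ring

variable (K) in
def wedgeRight (v : Fin m → K) : (Fin m → K) →ₗ[K] Fin m → Fin m → K where
  toFun u := wedge u v
  map_add' u u' := funext₂ fun i j => by simp only [wedge, Pi.add_apply]; ring
  map_smul' c u := funext₂ fun i j => by
    simp only [wedge, Pi.smul_apply, smul_eq_mul, RingHom.id_apply]; ring

theorem ker_wedgeRight {v : Fin m → K} (hv : v ≠ 0) : LinearMap.ker (wedgeRight K v) = K ∙ v :=
  Submodule.ext fun _ => wedge_eq_zero_iff hv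

end Wedge

theorem Fin.cons_zero_ne_zero {α : Type*} [Zero α] {n : ℕ} {y : Fin n → α} (hy : y ≠ 0) :
    (Fin.cons 0 y : Fin (n + 1) → α) ≠ 0 :=
  Matrix.cons_nonzero_iff.mpr (Or.inr hy)

section Kappa

variable {K : Type*} [Field K] {n : ℕ}

theorem finrank_span_range_wedge_cons_zero {y : Fin n → K} (hy : y ≠ 0) :
    Module.finrank K (span K
      (Set.range fun x : Fin n → K => wedge (Fin.cons (0 : K) x) (Fin.cons (0 : K) y)))
      = n - 1 := by
  set g : (Fin n → K) →ₗ[K] Fin (n + 1) → K := LinearMap.vecCons 0 LinearMap.id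
  have hg : Function.Injective g := Fin.cons_right_injective (α := fun _ => K) 0
  have hker : LinearMap.ker (wedgeRight K (Fin.cons 0 y) ∘ₗ g) = K ∙ y := by
    rw [LinearMap.ker_comp, ker_wedgeRight (Fin.cons_zero_ne_zero hy),
      ← comap_map_eq_of_injective hg (K ∙ y), map_span, Set.image_singleton]
    rfl
  have hrange : (Set.range fun x : Fin n → K => wedge (Fin.cons (0 : K) x) (Fin.cons (0 : K) y))
      = LinearMap.range (wedgeRight K (Fin.cons 0 y) ∘ₗ g) := rfl
  have hnullity := LinearMap.finrank_range_add_finrank_ker (wedgeRight K (Fin.cons 0 y) ∘ₗ g)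
  rw [hker, finrank_span_singleton hy, Module.finrank_fin_fun] at hnullity
  rw [hrange, span_eq]
  omega

theorem range_wedge_cons_one_cons_zero {y : Fin n → K} (hy : y ≠ 0) :
    Set.range (fun x : Fin n → K => wedge (Fin.cons 1 x) (Fin.cons (0 : K) y))
      = {z : Fin (n + 1) → Fin (n + 1) → K |
            (∀ i j, z j i = - z i j) ∧ (∀ i, z i i = 0) ∧
            (∀ j : Fin n, z 0 j.succ = y j) ∧ z 0 0 = 0}
        ∩ {z | ∃ u v : Fin (n + 1) → K, z = wedge u v} := by
  ext z
  constructor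
  · rintro ⟨x, rfl⟩
    refine ⟨⟨fun i j => ?_, fun i => ?_, fun j => ?_, ?_⟩, _, _, rfl⟩ <;> simp [wedge]
  · rintro ⟨⟨-, -, hrow, -⟩, u, v, rfl⟩
    have hrow₀ : wedge u v 0 = Fin.cons 0 y := funext (Fin.cases (by simp [wedge]) hrow)
    obtain ⟨a, ha, hav⟩ := exists_wedge_eq_wedge_apply 0 (hrow₀ ▸ Fin.cons_zero_ne_zero hy)
    refine ⟨Fin.tail a, ?_⟩
    beta_reduce
    rw [hav, hrow₀, ← ha, Fin.cons_self_tail]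

end Kappa

theorem stmt_19_general {K : Type*} [Field K] (n : ℕ)
    (y : Fin n → K) (hy : y ≠ 0) :
    (Set.range (fun x : Fin n → K => wedge (Fin.cons 1 x) (Fin.cons (0 : K) y))
      = {z : Fin (n + 1) → Fin (n + 1) → K |
            (∀ i j, z j i = - z i j) ∧ (∀ i, z i i = 0) ∧
            (∀ j : Fin n, z 0 j.succ = y j) ∧ z 0 0 = 0}
        ∩ {z | ∃ u v : Fin (n + 1) → K, z = wedge u v})
    ∧ Module.finrank K (Submodule.span K
        (Set.range (fun x : Fin n → K => wedge (Fin.cons (0 : K) x) (Fin.cons (0 : K) y))))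
      = n - 1 :=
  ⟨range_wedge_cons_one_cons_zero hy, finrank_span_range_wedge_cons_zero hy⟩

/-- For nonzero `y ∈ Kⁿ`, the map `κ(·,y) : x ↦ (1,x) ∧ (0,y)` has image exactly
`W_y ∩ Ȳ`, where `W_y = e₀ ∧ (0,y) + ⋀²({0}×Kⁿ)` (alternating 2-tensors whose
`0`-th row is `(0,y)`) and `Ȳ` is the set of decomposable 2-vectors; moreover its
linear part `x ↦ (0,x) ∧ (0,y)` has rank `n − 1`. -/
theorem stmt_19 {K : Type*} [Field K] (n : ℕ) (hn : 2 ≤ n)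
    (y : Fin n → K) (hy : y ≠ 0) :
    (Set.range (fun x : Fin n → K => wedge (Fin.cons 1 x) (Fin.cons (0 : K) y))
      = {z : Fin (n + 1) → Fin (n + 1) → K |
            (∀ i j, z j i = - z i j) ∧ (∀ i, z i i = 0) ∧
            (∀ j : Fin n, z 0 j.succ = y j) ∧ z 0 0 = 0}
        ∩ {z | ∃ u v : Fin (n + 1) → K, z = wedge u v})
    ∧ Module.finrank K (Submodule.span K
        (Set.range (fun x : Fin n → K => wedge (Fin.cons (0 : K) x) (Fin.cons (0 : K) y))))
      = n - 1 :=
  stmt_19_general n y hy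
end
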